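/- For every positive integer n and every subset I of {1,...,n}, the number of permutations π of {1,...,n} with Aexc(π) = I equals the number of permutations π of {1,...,n} with Des(π) = I. -/

import Mathlib

open Finset

/-- The one-line notation value of `π` at position `k ∈ {1,…,n}`:
`oneLine π k = π(k)` with `1`-indexed positions and values. -/
def oneLine {n : ℕ} (π : Equiv.Perm (Fin n)) (k : ℕ) : ℕ :=
  if h : k - 1 < n then ((π ⟨k - 1, h⟩ : Fin n) : ℕ) + 1 else k

/-- `SUC(π) = {i ∈ {1,…,n-1} : π(i+1) = π(i)+1}` (position set). -/
def SUC {n : ℕ} (π : Equiv.Perm (Fin n)) : Finset ℕ :=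
  (Finset.Icc 1 (n - 1)).filter (fun i => oneLine π (i + 1) = oneLine π i + 1)

/-- `FIX(π) = {i ∈ {1,…,n-1} : π(i) = i}` (position set). -/
def FIX {n : ℕ} (π : Equiv.Perm (Fin n)) : Finset ℕ :=
  (Finset.Icc 1 (n - 1)).filter (fun i => oneLine π i = i)

/-- `Asc₂(π) = {π(i+1) : i ∈ {1,…,n-1}, π(i+1) ≥ π(i)+2}` (value set). -/
def Asc2 {n : ℕ} (π : Equiv.Perm (Fin n)) : Finset ℕ :=
  ((Finset.Icc 1 (n - 1)).filter (fun i => oneLine π i + 2 ≤ oneLine π (i + 1))).image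
    (fun i => oneLine π (i + 1))

/-- `Des(π) = {π(i+1) : i ∈ {1,…,n-1}, π(i) > π(i+1)}` (value set). -/
def DesSet {n : ℕ} (π : Equiv.Perm (Fin n)) : Finset ℕ :=
  ((Finset.Icc 1 (n - 1)).filter (fun i => oneLine π (i + 1) < oneLine π i)).image
    (fun i => oneLine π (i + 1))

/-- `Suc(π) = {π(i+1) : i ∈ {1,…,n-1}, π(i+1) = π(i)+1}` (value set). -/
def SucSet {n : ℕ} (π : Equiv.Perm (Fin n)) : Finset ℕ :=
  ((Finset.Icc 1 (n - 1)).filter (fun i => oneLine π (i + 1) = oneLine π i + 1)).image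
    (fun i => oneLine π (i + 1))

/-- `Aexc(π) = {π(i) : i ∈ {2,…,n}, π(i) < i}` (value set). -/
def Aexc {n : ℕ} (π : Equiv.Perm (Fin n)) : Finset ℕ :=
  ((Finset.Icc 2 n).filter (fun i => oneLine π i < i)).image (fun i => oneLine π i)

/-- `Êxc(π) = {π(i) : i ∈ {2,…,n}, π(i) > i}` (value set). -/
def ExcHat {n : ℕ} (π : Equiv.Perm (Fin n)) : Finset ℕ :=
  ((Finset.Icc 2 n).filter (fun i => i < oneLine π i)).image (fun i => oneLine π i)

/-- `F̂ix(π) = {π(i) : i ∈ {2,…,n}, π(i) = i}` (value set). -/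
def FixHat {n : ℕ} (π : Equiv.Perm (Fin n)) : Finset ℕ :=
  ((Finset.Icc 2 n).filter (fun i => oneLine π i = i)).image (fun i => oneLine π i)

/-- `depth(π) = ∑_{i : π(i) > i} (π(i) − i)`. -/
def depthStat {n : ℕ} (π : Equiv.Perm (Fin n)) : ℕ :=
  ∑ i ∈ (Finset.Icc 1 n).filter (fun i => i < oneLine π i), (oneLine π i - i)

/-- `drp(π) = ∑_{i ∈ {1,…,n-1} : π(i) > π(i+1)} (π(i) − π(i+1))`. -/
def drpStat {n : ℕ} (π : Equiv.Perm (Fin n)) : ℕ :=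
  ∑ i ∈ (Finset.Icc 1 (n - 1)).filter (fun i => oneLine π (i + 1) < oneLine π i),
    (oneLine π i - oneLine π (i + 1))

/-- `exc(π) = |{i ∈ {1,…,n} : π(i) > i}|`. -/
def excNum {n : ℕ} (π : Equiv.Perm (Fin n)) : ℕ :=
  ((Finset.Icc 1 n).filter (fun i => i < oneLine π i)).card

/-- `nexc(π) = |{i ∈ {1,…,n} : π(i) < i}|`. -/
def nexcNum {n : ℕ} (π : Equiv.Perm (Fin n)) : ℕ :=
  ((Finset.Icc 1 n).filter (fun i => oneLine π i < i)).card

/-- `des(π) = |{i ∈ {1,…,n-1} : π(i) > π(i+1)}|`. -/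
def desNum {n : ℕ} (π : Equiv.Perm (Fin n)) : ℕ :=
  ((Finset.Icc 1 (n - 1)).filter (fun i => oneLine π (i + 1) < oneLine π i)).card

/-- `asc(π) = |{i ∈ {1,…,n-1} : π(i) < π(i+1)}|`. -/
def ascNum {n : ℕ} (π : Equiv.Perm (Fin n)) : ℕ :=
  ((Finset.Icc 1 (n - 1)).filter (fun i => oneLine π i < oneLine π (i + 1))).card

/-- `inv(π) = |{(i,j) : 1 ≤ i < j ≤ n, π(i) > π(j)}|`. -/
def invNum {n : ℕ} (π : Equiv.Perm (Fin n)) : ℕ :=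
  (((Finset.Icc 1 n) ×ˢ (Finset.Icc 1 n)).filter
    (fun p : ℕ × ℕ => p.1 < p.2 ∧ oneLine π p.2 < oneLine π p.1)).card

/-! Cut the word of `σ` before each left-to-right maximum and close every block `M a₁ … aₖ`
(all `aⱼ < M`) into the cycle `M ↦ a₁ ↦ ⋯ ↦ aₖ ↦ M`; call the result `foata σ`. The steps
`aⱼ ↦ aⱼ₊₁` (with `a₀ = M`) that go down are exactly the descents of the word, with the same
bottom value, while the closing steps `aₖ ↦ M` go up to a left-to-right maximum, which is never a
descent bottom. Hence `Aexc (foata σ) = Des σ`. The word is recovered from `foata σ` from right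
to left: the image of `σ i` only involves the entries after position `i`, because the prefix
maximum at `i` is the largest value not occurring after `i`. So `foata` is a bijection.
-/

section Foata

variable {n : ℕ}

def prefixMax (σ : Equiv.Perm (Fin n)) (i : Fin n) : Fin n :=
  ((Iic i).image σ).max' (nonempty_Iic.image σ)

lemma le_prefixMax (σ : Equiv.Perm (Fin n)) {i j : Fin n} (h : j ≤ i) : σ j ≤ prefixMax σ i :=
  le_max' _ _ (mem_image_of_mem σ (mem_Iic.2 h))

lemma exists_apply_eq_prefixMax (σ : Equiv.Perm (Fin n)) (i : Fin n) :
    ∃ j ≤ i, σ j = prefixMax σ i := by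
  simpa [prefixMax] using max'_mem ((Iic i).image σ) (nonempty_Iic.image σ)

lemma prefixMax_mono (σ : Equiv.Perm (Fin n)) : Monotone (prefixMax σ) := fun i _ h => by
  obtain ⟨j, hj, hje⟩ := exists_apply_eq_prefixMax σ i
  exact hje ▸ le_prefixMax σ (hj.trans h)

lemma prefixMax_ne_apply (σ : Equiv.Perm (Fin n)) {i j : Fin n} (h : i < j) :
    prefixMax σ i ≠ σ j := by
  obtain ⟨k, hk, hke⟩ := exists_apply_eq_prefixMax σ i
  rw [← hke]
  exact σ.injective.ne (hk.trans_lt h).ne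

lemma mem_image_Iic_iff (σ : Equiv.Perm (Fin n)) (i y : Fin n) :
    y ∈ (Iic i).image σ ↔ ¬ ∃ j, i < j ∧ σ j = y := by
  simp only [mem_image, mem_Iic, not_exists, not_and, ← not_le]
  constructor
  · rintro ⟨j, hj, rfl⟩ k hk hkj
    exact hk (σ.injective hkj ▸ hj)
  · intro h
    exact ⟨σ.symm y, not_not.1 fun hy => h _ hy (σ.apply_symm_apply y), σ.apply_symm_apply y⟩

lemma prefixMax_congr {σ τ : Equiv.Perm (Fin n)} {i : Fin n} (h : ∀ j, i < j → σ j = τ j) :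
    prefixMax σ i = prefixMax τ i := by
  have himage : (Iic i).image σ = (Iic i).image τ := by
    ext y
    simp only [mem_image_Iic_iff]
    exact not_congr (exists_congr fun j => and_congr_right fun hj => by rw [h j hj])
  simp only [prefixMax, himage]

def cycleSucc (σ : Equiv.Perm (Fin n)) (i : Fin n) : Fin n :=
  if h : (i : ℕ) + 1 < n then
    if σ ⟨i + 1, h⟩ < prefixMax σ i then σ ⟨i + 1, h⟩ else prefixMax σ i
  else prefixMax σ i

lemma cycleSucc_cases (σ : Equiv.Perm (Fin n)) (i : Fin n) :
    (∃ j : Fin n, (j : ℕ) = i + 1 ∧ σ j < prefixMax σ i ∧ cycleSucc σ i = σ j) ∨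
      ((∀ j : Fin n, (j : ℕ) = i + 1 → prefixMax σ i ≤ σ j) ∧
        cycleSucc σ i = prefixMax σ i) := by
  unfold cycleSucc
  split_ifs with hn hlt
  · exact .inl ⟨_, rfl, hlt, rfl⟩
  · refine .inr ⟨fun j hj => ?_, rfl⟩
    obtain rfl : j = ⟨i + 1, hn⟩ := Fin.ext hj
    exact not_lt.1 hlt
  · exact .inr ⟨fun j hj => absurd (hj ▸ j.isLt) hn, rfl⟩

lemma cycleSucc_injective (σ : Equiv.Perm (Fin n)) : Function.Injective (cycleSucc σ) := by
  refine .of_lt_imp_ne fun i i' hii' => ?_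
  have hM : prefixMax σ i ≤ prefixMax σ i' := prefixMax_mono σ hii'.le
  rcases cycleSucc_cases σ i with ⟨j, hj, hjM, hi⟩ | ⟨hle, hi⟩ <;>
    rcases cycleSucc_cases σ i' with ⟨j', hj', -, hi'⟩ | ⟨-, hi'⟩ <;> rw [hi, hi']
  · exact σ.injective.ne (Fin.ne_of_val_ne (by omega))
  · exact (hjM.trans_le hM).ne
  · exact prefixMax_ne_apply σ (Fin.lt_def.2 (by omega))
  · let j : Fin n := ⟨i + 1, by omega⟩
    have hij : i < j := Fin.lt_def.2 (show (i : ℕ) < i + 1 by omega)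
    refine ne_of_lt ?_
    calc prefixMax σ i < σ j := lt_of_le_of_ne (hle j rfl) (prefixMax_ne_apply σ hij)
      _ ≤ prefixMax σ i' := le_prefixMax σ (Fin.le_def.2 (show (i : ℕ) + 1 ≤ i' by omega))

lemma cycleSucc_congr {σ τ : Equiv.Perm (Fin n)} {i : Fin n} (h : ∀ j, i < j → σ j = τ j) :
    cycleSucc σ i = cycleSucc τ i := by
  unfold cycleSucc
  rw [prefixMax_congr h]
  refine dite_congr rfl (fun hn => ?_) fun _ => rfl
  rw [h _ (Fin.lt_def.2 (by simp))]

noncomputable def foata (σ : Equiv.Perm (Fin n)) : Equiv.Perm (Fin n) :=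
  σ.symm.trans (Equiv.ofBijective _ (cycleSucc_injective σ).bijective_of_finite)

lemma foata_apply_apply (σ : Equiv.Perm (Fin n)) (i : Fin n) : foata σ (σ i) = cycleSucc σ i := by
  simp [foata]

lemma foata_injective : Function.Injective (foata : Equiv.Perm (Fin n) → Equiv.Perm (Fin n)) := by
  intro σ τ h
  ext1 i
  induction i using WellFoundedGT.induction with
  | _ i ih =>
    apply (foata σ).injective
    rw [foata_apply_apply, h, foata_apply_apply]
    exact cycleSucc_congr ih

def antiExcedanceValues (π : Equiv.Perm (Fin n)) : Finset (Fin n) :=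
  univ.filter fun y => y < π.symm y

def descentBottoms (σ : Equiv.Perm (Fin n)) : Finset (Fin n) :=
  univ.filter fun y => ∃ i : Fin n, (σ.symm y : ℕ) = i + 1 ∧ y < σ i

lemma prefixMax_notMem_descentBottoms (σ : Equiv.Perm (Fin n)) (i : Fin n) :
    prefixMax σ i ∉ descentBottoms σ := by
  obtain ⟨k, hk, hke⟩ := exists_apply_eq_prefixMax σ i
  simp only [descentBottoms, mem_filter, mem_univ, true_and, ← hke, Equiv.symm_apply_apply,
    not_exists, not_and, not_lt]
  intro j hj
  exact hke ▸ le_prefixMax σ (Fin.le_def.2 (by have := Fin.le_def.1 hk; omega))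

lemma cycleSucc_lt_iff_mem_descentBottoms (σ : Equiv.Perm (Fin n)) (i : Fin n) :
    cycleSucc σ i < σ i ↔ cycleSucc σ i ∈ descentBottoms σ := by
  rcases cycleSucc_cases σ i with ⟨j, hj, -, h⟩ | ⟨-, h⟩ <;> rw [h]
  · simp only [descentBottoms, mem_filter, mem_univ, true_and, Equiv.symm_apply_apply]
    refine ⟨fun hlt => ⟨i, hj, hlt⟩, ?_⟩
    rintro ⟨k, hk, hlt⟩
    obtain rfl : k = i := Fin.ext (by omega)
    exact hlt
  · exact iff_of_false (not_lt.2 (le_prefixMax σ le_rfl)) (prefixMax_notMem_descentBottoms σ i)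

lemma antiExcedanceValues_foata (σ : Equiv.Perm (Fin n)) :
    antiExcedanceValues (foata σ) = descentBottoms σ := by
  ext y
  obtain ⟨i, rfl⟩ := Finite.surjective_of_injective (cycleSucc_injective σ) y
  have hsymm : (foata σ).symm (cycleSucc σ i) = σ i := by
    rw [Equiv.symm_apply_eq, foata_apply_apply]
  simp only [antiExcedanceValues, mem_filter, mem_univ, true_and, hsymm]
  exact cycleSucc_lt_iff_mem_descentBottoms σ i

lemma oneLine_succ (π : Equiv.Perm (Fin n)) (i : Fin n) : oneLine π (i + 1) = π i + 1 := by
  simp [oneLine]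

lemma Aexc_eq_image (π : Equiv.Perm (Fin n)) :
    Aexc π = (antiExcedanceValues π).image fun y : Fin n => (y : ℕ) + 1 := by
  ext a
  simp only [Aexc, antiExcedanceValues, mem_image, mem_filter, mem_Icc, mem_univ, true_and]
  constructor
  · rintro ⟨k, ⟨⟨hk2, hkn⟩, hlt⟩, rfl⟩
    obtain ⟨i, rfl⟩ : ∃ i : Fin n, k = i + 1 := ⟨⟨k - 1, by omega⟩, by simp; omega⟩
    rw [oneLine_succ] at hlt ⊢
    exact ⟨π i, by rw [Equiv.symm_apply_apply, Fin.lt_def]; omega, rfl⟩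
  · rintro ⟨y, hy, rfl⟩
    have hyi := Fin.lt_def.1 hy
    have hy' : oneLine π ((π.symm y : ℕ) + 1) = y + 1 := by
      rw [oneLine_succ, Equiv.apply_symm_apply]
    refine ⟨(π.symm y : ℕ) + 1, ⟨⟨by omega, (π.symm y).isLt⟩, ?_⟩, hy'⟩
    rw [hy']
    omega

lemma DesSet_eq_image (σ : Equiv.Perm (Fin n)) :
    DesSet σ = (descentBottoms σ).image fun y : Fin n => (y : ℕ) + 1 := by
  ext a
  simp only [DesSet, descentBottoms, mem_image, mem_filter, mem_Icc, mem_univ, true_and]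
  constructor
  · rintro ⟨k, ⟨⟨hk1, hkn⟩, hlt⟩, rfl⟩
    obtain ⟨i, rfl⟩ : ∃ i : Fin n, k = i + 1 := ⟨⟨k - 1, by omega⟩, by simp; omega⟩
    have hj : (i : ℕ) + 1 < n := by omega
    have hsucc : (i : ℕ) + 1 + 1 = ((⟨i + 1, hj⟩ : Fin n) : ℕ) + 1 := rfl
    rw [hsucc, oneLine_succ, oneLine_succ] at hlt
    rw [hsucc, oneLine_succ]
    exact ⟨σ ⟨i + 1, hj⟩, ⟨i, by rw [Equiv.symm_apply_apply], Fin.lt_def.2 (by omega)⟩, rfl⟩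
  · rintro ⟨y, ⟨i, hi, hlt⟩, rfl⟩
    have hyi := Fin.lt_def.1 hlt
    have hy : oneLine σ ((i : ℕ) + 1 + 1) = y + 1 := by
      rw [← hi, oneLine_succ, Equiv.apply_symm_apply]
    refine ⟨i + 1, ⟨⟨by omega, by omega⟩, ?_⟩, hy⟩
    rw [hy, oneLine_succ]
    omega

lemma Aexc_foata (σ : Equiv.Perm (Fin n)) : Aexc (foata σ) = DesSet σ := by
  rw [Aexc_eq_image, DesSet_eq_image, antiExcedanceValues_foata]

end Foata

theorem stmt16_general (n : ℕ) (I : Finset ℕ) :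
    (Finset.univ.filter (fun π : Equiv.Perm (Fin n) => Aexc π = I)).card =
      (Finset.univ.filter (fun π : Equiv.Perm (Fin n) => DesSet π = I)).card :=
  (card_equiv (Equiv.ofBijective _ foata_injective.bijective_of_finite)
    fun σ => by simp [Aexc_foata]).symm

/-- Aexc and Des are equidistributed as set-valued statistics. -/
theorem stmt16 (n : ℕ) (hn : 0 < n) (I : Finset ℕ) (hI : I ⊆ Finset.Icc 1 n) :
    (Finset.univ.filter (fun π : Equiv.Perm (Fin n) => Aexc π = I)).card =
      (Finset.univ.filter (fun π : Equiv.Perm (Fin n) => DesSet π = I)).card :=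
  stmt16_general n I
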